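/- Let f be a complex polynomial of degree d ≥ 2 and let z₁ ∈ ℂ be a superattracting fixed point of f of local degree r with 2 ≤ r ≤ d − 1; that is, f(z₁) = z₁, the j-th derivatives satisfy f^{(j)}(z₁) = 0 for 1 ≤ j ≤ r − 1, and f^{(r)}(z₁) ≠ 0. Let z ∈ ℂ with z ∉ Precrit(f) and f^n(z) → z₁ as n → ∞. Then lim_{n→∞} S_{f^n}(z)/d^{2n} = 0. -/

import Mathlib

open Filter Topology MeasureTheory Set

/-- The Schwarzian derivative of a holomorphic function. -/
noncomputable def schwarzian (F : ℂ → ℂ) (z : ℂ) : ℂ :=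
  iteratedDeriv 3 F z / deriv F z - (3/2) * (iteratedDeriv 2 F z / deriv F z)^2

/-- The union of all backward orbits of the critical points:
`Precrit(f) = {c : (f^n)'(c) = 0 for some n ≥ 1}`. -/
def precrit (f : ℂ → ℂ) : Set ℂ :=
  {c : ℂ | ∃ n : ℕ, 1 ≤ n ∧ deriv (f^[n]) c = 0}

/-- The basin of infinity of `f`. -/
def basinInf (f : ℂ → ℂ) : Set ℂ :=
  {z : ℂ | Tendsto (fun n : ℕ => ‖f^[n] z‖) atTop atTop}

/-- `f` is affinely conjugate to `z ↦ z ^ d`. -/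
def conjToPow (f : ℂ → ℂ) (d : ℕ) : Prop :=
  ∃ a b : ℂ, a ≠ 0 ∧ ∀ z : ℂ, f (a * z + b) = a * z ^ d + b

/-
The Schwarzian satisfies the chain rule `S_{A ∘ B} = (S_A ∘ B) · B'² + S_B`, so
`S_{f^n}(z) = ∑_{k<n} S_f(f^k z) · ((f^k)'(z))²`. In the coordinate `w = x - z₁` the map is
`q(w) = w^r s(w)` with `s(0) ≠ 0`. Along the orbit `w_k = f^k(z) - z₁ → 0` the factor
`w_k² S_f(f^k z)` stays bounded, while `u_k = (f^k)'(z) / w_k` obeys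
`u_{k+1} = (w_k q'(w_k) / q(w_k)) · u_k` with a ratio tending to `r < d`; hence `u_k = o(d^k)`,
every term of the sum is `o(d^{2k})`, and so is the sum.
-/

open Polynomial Finset Asymptotics

theorem Polynomial.iteratedDeriv_eval {𝕜 : Type*} [NontriviallyNormedField 𝕜] (P : 𝕜[X])
    (k : ℕ) : iteratedDeriv k (fun x => P.eval x) = fun x => (derivative^[k] P).eval x := by
  induction k with
  | zero => simp
  | succ k ih =>
    rw [iteratedDeriv_succ, ih, Function.iterate_succ_apply']
    ext x
    exact Polynomial.deriv _

theorem schwarzian_eval (P : ℂ[X]) (w : ℂ) :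
    schwarzian (fun x => P.eval x) w = (derivative^[3] P).eval w / (derivative P).eval w
      - 3 / 2 * ((derivative^[2] P).eval w / (derivative P).eval w) ^ 2 := by
  rw [schwarzian, iteratedDeriv_eval, iteratedDeriv_eval, Polynomial.deriv]

theorem schwarzian_comp_eval (A B : ℂ[X]) {z : ℂ} (hA : (derivative A).eval (B.eval z) ≠ 0)
    (hB : (derivative B).eval z ≠ 0) :
    schwarzian (fun x => (A.comp B).eval x) z
      = schwarzian (fun x => A.eval x) (B.eval z) * (derivative B).eval z ^ 2
        + schwarzian (fun x => B.eval x) z := by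
  rw [schwarzian_eval, schwarzian_eval, schwarzian_eval]
  simp only [Function.iterate_succ_apply', Function.iterate_zero_apply,
    derivative_comp, derivative_mul, derivative_add, eval_mul, eval_add, eval_comp]
  field_simp
  ring

theorem deriv_iterate_succ {𝕜 : Type*} [NontriviallyNormedField 𝕜] {f : 𝕜 → 𝕜}
    (hf : Differentiable 𝕜 f) (n : ℕ) (x : 𝕜) :
    deriv f^[n + 1] x = deriv f (f^[n] x) * deriv f^[n] x := by
  rw [Function.iterate_succ', deriv_comp x (hf _) (hf.iterate n x)]

theorem iterate_eval_eq_eval_iterate_comp {R : Type*} [CommSemiring R] (P : R[X]) (n : ℕ) :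
    (fun x => P.eval x)^[n] = fun x => (P.comp^[n] X).eval x := by
  simp

theorem schwarzian_iterate_eval_eq_sum (P : ℂ[X]) {z : ℂ} (hz : z ∉ precrit (fun x => P.eval x))
    (n : ℕ) :
    schwarzian (fun x => P.eval x)^[n] z = ∑ k ∈ range n,
      schwarzian (fun x => P.eval x) ((fun x => P.eval x)^[k] z)
        * deriv (fun x => P.eval x)^[k] z ^ 2 := by
  induction n with
  | zero =>
    rw [iterate_eval_eq_eval_iterate_comp, Function.iterate_zero_apply, schwarzian_eval]
    simp
  | succ n ih =>
    have hn : deriv (fun x => P.eval x)^[n + 1] z ≠ 0 := fun h => hz ⟨n + 1, by omega, h⟩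
    rw [deriv_iterate_succ (Polynomial.differentiable P)] at hn
    rw [sum_range_succ, ← ih]
    simp only [iterate_eval_eq_eval_iterate_comp, Function.iterate_succ_apply',
      Polynomial.deriv] at hn ⊢
    rw [schwarzian_comp_eval _ _ (by simpa using left_ne_zero_of_mul hn) (right_ne_zero_of_mul hn)]
    simp only [iterate_comp_eval, eval_X]
    ring

theorem X_mul_derivative_X_pow_mul {R : Type*} [CommRing R] (m : ℕ) (P : R[X]) :
    X * derivative (X ^ m * P) = C (m : R) * (X ^ m * P) + X ^ (m + 1) * derivative P := by
  rw [derivative_mul, derivative_X_pow]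
  cases m with
  | zero => simp
  | succ m => push_cast; ring

/-- Multiplying by `X ^ j` keeps the quotient by `X ^ r` a polynomial even when `j > r`. -/
theorem exists_X_pow_mul_iterate_derivative {R : Type*} [CommRing R] (r : ℕ) (s : R[X]) (j : ℕ) :
    ∃ t : R[X], X ^ j * derivative^[j] (X ^ r * s) = X ^ r * t ∧
      t.eval 0 = (∏ i ∈ range j, ((r : R) - i)) * s.eval 0 := by
  induction j with
  | zero => exact ⟨s, by simp⟩
  | succ j ih =>
    obtain ⟨t, ht, ht0⟩ := ih
    refine ⟨C ((r : R) - j) * t + X * derivative t, ?_, ?_⟩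
    · have h := congrArg (fun P => X * derivative P) ht
      simp only [X_mul_derivative_X_pow_mul] at h
      rw [Function.iterate_succ_apply', map_sub]
      linear_combination h - C (j : R) * ht
    · simp only [map_sub, map_natCast, eval_add, eval_mul, eval_sub, eval_natCast, ht0, eval_X,
        zero_mul, add_zero, prod_range_succ]
      ring

theorem isLittleO_pow_of_tendsto_ratio {𝕜 : Type*} [NormedField 𝕜] {u a : ℕ → 𝕜} {L : 𝕜}
    {D : ℝ} (hu : ∀ k, u (k + 1) = a k * u k) (ha : Tendsto a atTop (𝓝 L)) (hLD : ‖L‖ < D) :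
    u =o[atTop] fun k => D ^ k := by
  obtain ⟨ρ, hLρ, hρD⟩ := exists_between hLD
  have hρ : 0 < ρ := (norm_nonneg L).trans_lt hLρ
  obtain ⟨K, hK⟩ := eventually_atTop.mp (ha.norm.eventually (eventually_le_nhds hLρ))
  have hgeom (j : ℕ) : ‖u (K + j)‖ ≤ ρ ^ j * ‖u K‖ :=
    le_geom (u := fun j => ‖u (K + j)‖) hρ.le j fun k _ => by
      rw [← add_assoc, hu, norm_mul]
      exact mul_le_mul_of_nonneg_right (hK _ (by omega)) (norm_nonneg _)
  have hO : u =O[atTop] fun k => ρ ^ k := by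
    refine IsBigO.of_bound (‖u K‖ / ρ ^ K) (eventually_atTop.mpr ⟨K, fun k hk => ?_⟩)
    obtain ⟨j, rfl⟩ := Nat.exists_eq_add_of_le hk
    rw [Real.norm_of_nonneg (by positivity), pow_add,
      show ‖u K‖ / ρ ^ K * (ρ ^ K * ρ ^ j) = ρ ^ j * ‖u K‖ by field_simp]
    exact hgeom j
  exact hO.trans_isLittleO (isLittleO_pow_pow_of_lt_left hρ.le hρD)

theorem isLittleO_sum_range_pow {E : Type*} [NormedAddCommGroup E] {c : ℕ → E} {D : ℝ}
    (hD : 1 < D) (hc : c =o[atTop] fun k => D ^ k) :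
    (fun n => ∑ k ∈ range n, c k) =o[atTop] fun n => D ^ n := by
  have hgeom : (fun n => ∑ k ∈ range n, D ^ k) =O[atTop] fun n => D ^ n := by
    refine IsBigO.of_bound (1 / (D - 1)) (Eventually.of_forall fun n => ?_)
    rw [Real.norm_of_nonneg (by positivity), Real.norm_of_nonneg (by positivity),
      geom_sum_eq hD.ne', one_div_mul_eq_div]
    gcongr
    linarith
  have hdiv : Tendsto (fun n => ∑ k ∈ range n, D ^ k) atTop atTop := by
    refine tendsto_atTop_mono (fun n => ?_) tendsto_natCast_atTop_atTop
    simpa using sum_le_sum fun k (_ : k ∈ range n) => one_le_pow₀ hD.le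
  exact (hc.sum_range (fun k => by positivity) hdiv).trans_isBigO hgeom

section LocalModel

variable {r : ℕ} {s : ℂ[X]}

theorem tendsto_mul_derivative_div_eval (hs : s.eval 0 ≠ 0) :
    Tendsto (fun w => w * (derivative (X ^ r * s)).eval w / (X ^ r * s).eval w)
      (𝓝[≠] 0) (𝓝 (r : ℂ)) := by
  obtain ⟨t, ht, ht0⟩ := exists_X_pow_mul_iterate_derivative r s 1
  have hcont : ContinuousAt (fun w => t.eval w / s.eval w) 0 := by fun_prop (disch := exact hs)
  have hlim : Tendsto (fun w => t.eval w / s.eval w) (𝓝 0) (𝓝 (r : ℂ)) := by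
    simpa [ht0, hs] using hcont.tendsto
  refine (tendsto_nhdsWithin_of_tendsto_nhds hlim).congr' ?_
  filter_upwards [self_mem_nhdsWithin] with w hw
  have htw : w * (derivative (X ^ r * s)).eval w = w ^ r * t.eval w := by
    simpa using congrArg (eval w) ht
  rw [htw, eval_mul, eval_pow, eval_X, mul_div_mul_left _ _ (pow_ne_zero r hw)]

theorem sq_mul_schwarzian_isBigO_one (hr : r ≠ 0) (hs : s.eval 0 ≠ 0) :
    (fun w => w ^ 2 * schwarzian (fun x => (X ^ r * s).eval x) w) =O[𝓝[≠] 0]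
      fun _ => (1 : ℝ) := by
  obtain ⟨t₁, ht₁, ht₁0⟩ := exists_X_pow_mul_iterate_derivative r s 1
  obtain ⟨t₂, ht₂, -⟩ := exists_X_pow_mul_iterate_derivative r s 2
  obtain ⟨t₃, ht₃, -⟩ := exists_X_pow_mul_iterate_derivative r s 3
  have h₁0 : t₁.eval 0 ≠ 0 := by simpa [ht₁0] using And.intro hr hs
  have hcont : ContinuousAt (fun w => t₃.eval w / t₁.eval w
      - 3 / 2 * (t₂.eval w / t₁.eval w) ^ 2) 0 := by
    fun_prop (disch := exact h₁0)
  refine (hcont.tendsto.isBigO_one ℝ).mono nhdsWithin_le_nhds |>.congr' ?_ EventuallyEq.rfl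
  filter_upwards [self_mem_nhdsWithin,
    nhdsWithin_le_nhds (t₁.continuous.continuousAt.eventually_ne h₁0)] with w hw hw₁
  have hw' : w ≠ 0 := hw
  have key (j : ℕ) (t : ℂ[X]) (h : X ^ j * derivative^[j] (X ^ r * s) = X ^ r * t) :
      (derivative^[j] (X ^ r * s)).eval w = w ^ r * t.eval w / w ^ j := by
    rw [eq_div_iff (pow_ne_zero j hw'), mul_comm]
    simpa using congrArg (eval w) h
  rw [schwarzian_eval, key 3 t₃ ht₃, key 2 t₂ ht₂, ← Function.iterate_one derivative,
    key 1 t₁ ht₁]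
  field_simp

theorem isLittleO_schwarzian_mul_sq_of_orbit {D : ℝ} (hr : r ≠ 0) (hs : s.eval 0 ≠ 0)
    (hrD : r < D) {w g : ℕ → ℂ} (hw : Tendsto w atTop (𝓝 0)) (hw0 : ∀ k, w k ≠ 0)
    (hw_succ : ∀ k, w (k + 1) = (X ^ r * s).eval (w k))
    (hg_succ : ∀ k, g (k + 1) = (derivative (X ^ r * s)).eval (w k) * g k) :
    (fun k => schwarzian (fun x => (X ^ r * s).eval x) (w k) * g k ^ 2) =o[atTop]
      fun k => (D ^ 2) ^ k := by
  have hw' : Tendsto w atTop (𝓝[≠] 0) :=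
    tendsto_nhdsWithin_iff.mpr ⟨hw, Eventually.of_forall hw0⟩
  have hu : ∀ k, g (k + 1) / w (k + 1) = w k * (derivative (X ^ r * s)).eval (w k)
      / (X ^ r * s).eval (w k) * (g k / w k) := by
    intro k
    have hw1 := hw0 (k + 1)
    rw [hw_succ] at hw1 ⊢
    rw [hg_succ]
    field_simp [hw0 k]
  have hu_o := isLittleO_pow_of_tendsto_ratio (u := fun k => g k / w k) hu
    ((tendsto_mul_derivative_div_eval hs).comp hw') (by simpa using hrD)
  have hv := (sq_mul_schwarzian_isBigO_one hr hs).comp_tendsto hw'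
  refine (hv.mul_isLittleO (hu_o.pow two_pos)).congr (fun k => ?_) (fun k => ?_)
  · simp only [Function.comp_apply]
    field_simp [hw0 k]
  · simp [← pow_mul, mul_comm]

end LocalModel

open Nat in
theorem factorial_mul_coeff_taylor {𝕜 : Type*} [NontriviallyNormedField 𝕜] (P : 𝕜[X]) (a : 𝕜)
    (j : ℕ) : (j ! : 𝕜) * (taylor a P).coeff j = iteratedDeriv j (fun x => P.eval x) a := by
  rw [taylor_coeff, iteratedDeriv_eval, ← factorial_smul_hasseDeriv]
  simp

theorem exists_taylor_sub_C_eq_X_pow_mul {𝕜 : Type*} [NontriviallyNormedField 𝕜] [CharZero 𝕜]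
    (P : 𝕜[X]) {a : 𝕜} {r : ℕ} (hr : r ≠ 0) (hfix : P.eval a = a)
    (hvanish : ∀ j : ℕ, 1 ≤ j → j ≤ r - 1 → iteratedDeriv j (fun x => P.eval x) a = 0)
    (hrnz : iteratedDeriv r (fun x => P.eval x) a ≠ 0) :
    ∃ s : 𝕜[X], taylor a P - C a = X ^ r * s ∧ s.eval 0 ≠ 0 := by
  have hcoeff (j : ℕ) (hj : j ≠ 0) :
      (taylor a P - C a).coeff j = iteratedDeriv j (fun x => P.eval x) a / j.factorial := by
    rw [coeff_sub, coeff_C, if_neg hj, sub_zero, ← factorial_mul_coeff_taylor,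
      mul_div_cancel_left₀ _ (Nat.cast_ne_zero.mpr j.factorial_ne_zero)]
  obtain ⟨s, hs⟩ : X ^ r ∣ taylor a P - C a := by
    refine X_pow_dvd_iff.mpr fun j hj => ?_
    rcases eq_or_ne j 0 with rfl | hj0
    · simp [taylor_coeff_zero, hfix]
    · rw [hcoeff j hj0, hvanish j (by omega) (by omega), zero_div]
  refine ⟨s, hs, fun h0 => hrnz ?_⟩
  have := hcoeff r hr
  rw [hs, coeff_X_pow_mul', if_pos le_rfl, Nat.sub_self, coeff_zero_eq_eval_zero, h0] at this
  simpa [Nat.factorial_ne_zero] using this.symm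

theorem schwarzian_comp_add_const_sub_const (F : ℂ → ℂ) (a b w : ℂ) :
    schwarzian (fun x => F (x + a) - b) w = schwarzian F (w + a) := by
  have hshift (n : ℕ) (hn : n ≠ 0) :
      iteratedDeriv n (fun x => F (x + a) - b) w = iteratedDeriv n F (w + a) := by
    rw [show (fun x => F (x + a) - b) = fun x => -b + F (x + a) by ext; ring,
      iteratedDeriv_const_add (Nat.pos_of_ne_zero hn), iteratedDeriv_comp_add_const]
  simp only [schwarzian, ← iteratedDeriv_one, hshift 1 one_ne_zero, hshift 2 two_ne_zero,
    hshift 3 three_ne_zero]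

theorem iterate_ne_of_deriv_eq_zero {f : ℂ → ℂ} (hf : Differentiable ℂ f) {a z : ℂ}
    (ha : deriv f a = 0) (hz : z ∉ precrit f) (k : ℕ) : f^[k] z ≠ a := by
  intro hk
  refine hz ⟨k + 1, by omega, ?_⟩
  rw [deriv_iterate_succ hf, hk, ha, zero_mul]

theorem stmt17_general (d : ℕ) (p : Polynomial ℂ)
    (f : ℂ → ℂ) (hf : ∀ z, f z = p.eval z)
    (z₁ : ℂ) (hfix : f z₁ = z₁)
    (r : ℕ) (hr2 : 2 ≤ r) (hrd : r ≤ d - 1)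
    (hvanish : ∀ j : ℕ, 1 ≤ j → j ≤ r - 1 → iteratedDeriv j f z₁ = 0)
    (hrnz : iteratedDeriv r f z₁ ≠ 0)
    (z : ℂ) (hz : z ∉ precrit f)
    (hattr : Tendsto (fun n : ℕ => f^[n] z) atTop (𝓝 z₁)) :
    Tendsto (fun n : ℕ => schwarzian (f^[n]) z / (d : ℂ) ^ (2 * n)) atTop (𝓝 0) := by
  obtain rfl : f = fun x => p.eval x := funext hf
  obtain ⟨s, hq, hs⟩ := exists_taylor_sub_C_eq_X_pow_mul p (by omega) hfix hvanish hrnz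
  have hq_eval (x : ℂ) : (X ^ r * s).eval x = p.eval (x + z₁) - z₁ := by
    simp [← hq, taylor_eval]
  have hcrit : deriv (fun x => p.eval x) z₁ = 0 := by simpa using hvanish 1 le_rfl (by omega)
  have hc := isLittleO_schwarzian_mul_sq_of_orbit (r := r) (s := s) (D := d)
    (w := fun k => (fun x => p.eval x)^[k] z - z₁) (g := fun k => deriv (fun x => p.eval x)^[k] z)
    (by omega) hs (by exact_mod_cast (by omega : r < d)) (by simpa using hattr.sub_const z₁)
    (fun k => sub_ne_zero.mpr (iterate_ne_of_deriv_eq_zero p.differentiable hcrit hz k))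
    (fun k => by rw [hq_eval, sub_add_cancel, Function.iterate_succ_apply'])
    (fun k => by rw [deriv_iterate_succ p.differentiable, ← Polynomial.deriv, funext hq_eval,
      deriv_sub_const, deriv_comp_add_const (fun x => p.eval x), sub_add_cancel])
  have hsum : (fun n => schwarzian (fun x => p.eval x)^[n] z) =o[atTop]
      fun n => ((d : ℝ) ^ 2) ^ n := by
    simp only [schwarzian_iterate_eval_eq_sum p hz]
    refine isLittleO_sum_range_pow
      (one_lt_pow₀ (by exact_mod_cast (by omega : 1 < d)) two_ne_zero) (hc.congr_left fun k => ?_)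
    rw [funext hq_eval, schwarzian_comp_add_const_sub_const (fun x => p.eval x), sub_add_cancel]
  refine (hsum.trans_isBigO (isBigO_of_le _ fun n => ?_)).tendsto_div_nhds_zero
  simp [pow_mul]

/-- If `z₁` is a superattracting fixed point of `f` of local degree
`r` with `2 ≤ r ≤ d - 1`, and `z ∉ Precrit(f)` is attracted to `z₁`, then
`S_{f^n}(z)/d^{2n} → 0`. -/
theorem stmt17 (d : ℕ) (hd : 2 ≤ d) (p : Polynomial ℂ) (hdeg : p.natDegree = d)
    (f : ℂ → ℂ) (hf : ∀ z, f z = p.eval z)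
    (z₁ : ℂ) (hfix : f z₁ = z₁)
    (r : ℕ) (hr2 : 2 ≤ r) (hrd : r ≤ d - 1)
    (hvanish : ∀ j : ℕ, 1 ≤ j → j ≤ r - 1 → iteratedDeriv j f z₁ = 0)
    (hrnz : iteratedDeriv r f z₁ ≠ 0)
    (z : ℂ) (hz : z ∉ precrit f)
    (hattr : Tendsto (fun n : ℕ => f^[n] z) atTop (𝓝 z₁)) :
    Tendsto (fun n : ℕ => schwarzian (f^[n]) z / (d : ℂ) ^ (2 * n)) atTop (𝓝 0) :=
  stmt17_general d p f hf z₁ hfix r hr2 hrd hvanish hrnz z hz hattr
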